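/- arXiv:2205.02276 — 4 statements merged into one kernel-verified Lean document; each statement's English description precedes it below -/
import Mathlib

section
/- For any graph G on n ≥ 2 vertices and any vertex v, the least signless Laplacian eigenvalue of G − v is at least the least signless Laplacian eigenvalue of G minus 1: q_min(G) − 1 ≤ q_min(G − v). -/
/-!
Take a unit eigenvector `u` of `Q(G[s])` for its least eigenvalue and extend it by zero to `x`.
The `s × s` block of `Q(G)` is `Q(G[s])` plus the diagonal matrix of the numbers of neighbours
outside `s`, so the Rayleigh quotient of `x` for `Q(G)` exceeds `q_min(G[s])` by at most the
largest such number, and `q_min(G)` is at most that Rayleigh quotient. Deleting a single vertex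
`v` is the case `s = V ∖ {v}`, where every vertex has at most one neighbour outside `s`.
-/

open scoped Classical

/-- The signless Laplacian matrix `Q = D + A` of a graph. -/
noncomputable def qMatrix {V : Type*} [Fintype V] (G : SimpleGraph V) : Matrix V V ℝ :=
  Matrix.diagonal (fun v => (G.degree v : ℝ)) + G.adjMatrix ℝ

open Matrix Finset

theorem Fintype.sum_eq_sum_subtype_of_forall_notMem {ι M : Type*} [Fintype ι] [AddCommMonoid M]
    {s : Set ι} [Fintype s] {f : ι → M} (hf : ∀ i ∉ s, f i = 0) :
    ∑ i, f i = ∑ i : s, f i := by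
  rw [Finset.sum_set_coe]
  exact (Finset.sum_subset (subset_univ _) fun i _ hi => hf i (by simpa using hi)).symm

namespace Matrix

theorem dotProduct_mulVec_eq_submatrix {V R : Type*} [Fintype V] [CommSemiring R]
    (M : Matrix V V R) {s : Set V} [Fintype s] {x : V → R} (hx : ∀ a ∉ s, x a = 0) :
    x ⬝ᵥ (M *ᵥ x) = (x ∘ ((↑) : s → V)) ⬝ᵥ (M.submatrix (↑) (↑) *ᵥ (x ∘ ((↑) : s → V))) := by
  have hMx : ∀ a, x a * (M *ᵥ x) a = x a * ∑ b : s, M a b * x b := fun a => by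
    rw [mulVec, dotProduct, Fintype.sum_eq_sum_subtype_of_forall_notMem (s := s)]
    intro b hb
    simp [hx b hb]
  simp only [dotProduct, hMx]
  rw [Fintype.sum_eq_sum_subtype_of_forall_notMem (s := s)]
  · rfl
  · intro a ha
    simp [hx a ha]

theorem dotProduct_diagonal_mulVec_le {m : Type*} [Fintype m] [DecidableEq m] {d : m → ℝ}
    {c : ℝ} (hd : ∀ i, d i ≤ c) (u : m → ℝ) :
    u ⬝ᵥ (diagonal d *ᵥ u) ≤ c * (u ⬝ᵥ u) := by
  simp only [dotProduct, mulVec_diagonal, mul_sum]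
  exact sum_le_sum fun i _ => by
    nlinarith [mul_le_mul_of_nonneg_right (hd i) (mul_self_nonneg (u i))]

namespace IsHermitian

variable {m : Type*} [Fintype m] [DecidableEq m] {A : Matrix m m ℝ}

theorem posSemidef_sub_iInf_eigenvalues (hA : A.IsHermitian) :
    (A - algebraMap ℝ _ (⨅ i, hA.eigenvalues i)).PosSemidef := by
  refine posSemidef_iff_isHermitian_and_spectrum_nonneg.mpr ⟨hA.sub (isHermitian_diagonal _), ?_⟩
  rw [← spectrum.sub_singleton_eq, hA.spectrum_real_eq_range_eigenvalues]
  rintro _ ⟨_, ⟨i, rfl⟩, _, rfl, rfl⟩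
  exact sub_nonneg.mpr (ciInf_le (Finite.bddBelow_range hA.eigenvalues) i)

theorem iInf_eigenvalues_mul_dotProduct_self_le (hA : A.IsHermitian) (x : m → ℝ) :
    (⨅ i, hA.eigenvalues i) * (x ⬝ᵥ x) ≤ x ⬝ᵥ (A *ᵥ x) := by
  have h := hA.posSemidef_sub_iInf_eigenvalues.dotProduct_mulVec_nonneg x
  rw [sub_mulVec, dotProduct_sub, Algebra.algebraMap_eq_smul_one, smul_mulVec, one_mulVec,
    dotProduct_smul, smul_eq_mul] at h
  simpa using h

theorem exists_dotProduct_self_eq_one_and_eq_iInf_eigenvalues [Nonempty m]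
    (hA : A.IsHermitian) : ∃ u : m → ℝ, u ⬝ᵥ u = 1 ∧ u ⬝ᵥ (A *ᵥ u) = ⨅ i, hA.eigenvalues i := by
  obtain ⟨i, hi⟩ := exists_eq_ciInf_of_finite (f := hA.eigenvalues)
  refine ⟨hA.eigenvectorBasis i, ?_, by simp [← hi, hA.eigenvalues_eq i]⟩
  have h : inner ℝ (hA.eigenvectorBasis i) (hA.eigenvectorBasis i) = 1 := by
    rw [real_inner_self_eq_norm_sq, hA.eigenvectorBasis.orthonormal.1 i, one_pow]
  rw [EuclideanSpace.inner_eq_star_dotProduct] at h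
  simpa using h

end IsHermitian

end Matrix

section InducedSubgraph

variable {V : Type*} [Fintype V] (G : SimpleGraph V) (s : Set V) [Fintype s]

theorem SimpleGraph.degree_eq_degree_induce_add (a : s) :
    G.degree a = (G.induce s).degree a + #(G.neighborFinset a \ s.toFinset) := by
  rw [← card_neighborFinset_eq_degree, ← card_neighborFinset_eq_degree,
    ← card_inter_add_card_sdiff (G.neighborFinset a) s.toFinset,
    ← card_map (Function.Embedding.subtype (· ∈ s))]
  congr 1
  convert (congrArg card (map_neighborFinset_induce (G := G) a)).symm

theorem qMatrix_submatrix_val :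
    (qMatrix G).submatrix (↑) (↑) =
      qMatrix (G.induce s) + diagonal fun a : s => (#(G.neighborFinset a \ s.toFinset) : ℝ) := by
  ext a b
  by_cases h : a = b
  · subst h
    simp only [qMatrix, submatrix_apply, Matrix.add_apply, diagonal_apply_eq,
      G.degree_eq_degree_induce_add s, Nat.cast_add, SimpleGraph.adjMatrix_apply,
      SimpleGraph.irrefl, ↓reduceIte, add_zero, add_left_inj]
    congr 1
  · simp [qMatrix, h, Subtype.val_injective.ne h]

theorem iInf_eigenvalues_qMatrix_sub_le_induce [Nonempty s] (k : ℕ)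
    (hk : ∀ a : s, #(G.neighborFinset a \ s.toFinset) ≤ k)
    (hG : (qMatrix G).IsHermitian) (hH : (qMatrix (G.induce s)).IsHermitian) :
    (⨅ i, hG.eigenvalues i) - k ≤ ⨅ i, hH.eigenvalues i := by
  obtain ⟨u, hu_one, hu_min⟩ := hH.exists_dotProduct_self_eq_one_and_eq_iInf_eigenvalues
  set x : V → ℝ := Function.extend (↑) u 0
  have hxu : x ∘ (↑) = u := funext (Subtype.val_injective.extend_apply u 0)
  have hx : ∀ a ∉ s, x a = 0 := fun a ha =>
    Function.extend_apply' _ _ _ (by rintro ⟨b, rfl⟩; exact ha b.2)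
  have hxx : x ⬝ᵥ x = 1 := by
    rw [← hu_one, ← hxu, dotProduct, Fintype.sum_eq_sum_subtype_of_forall_notMem (s := s)]
    · rfl
    · intro a ha
      simp [hx a ha]
  have hout := dotProduct_diagonal_mulVec_le
    (d := fun a : s => (#(G.neighborFinset a \ s.toFinset) : ℝ)) (c := k)
    (fun a => by exact_mod_cast hk a) u
  calc (⨅ i, hG.eigenvalues i) - k = (⨅ i, hG.eigenvalues i) * (x ⬝ᵥ x) - k := by
        rw [hxx, mul_one]
    _ ≤ x ⬝ᵥ (qMatrix G *ᵥ x) - k :=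
        sub_le_sub_right (hG.iInf_eigenvalues_mul_dotProduct_self_le x) _
    _ = u ⬝ᵥ (qMatrix (G.induce s) *ᵥ u) +
          u ⬝ᵥ (diagonal (fun a : s => (#(G.neighborFinset a \ s.toFinset) : ℝ)) *ᵥ u) - k := by
        rw [dotProduct_mulVec_eq_submatrix _ hx, hxu, qMatrix_submatrix_val, add_mulVec,
          dotProduct_add]
    _ ≤ ⨅ i, hH.eigenvalues i := by rw [hu_one, mul_one] at hout; linarith

end InducedSubgraph

theorem qmin_vertex_deleted {n : ℕ} (hn : 2 ≤ n) (G : SimpleGraph (Fin n)) (v : Fin n)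
    (hQ : (qMatrix G).IsHermitian)
    (hQv : (qMatrix (G.induce {w | w ≠ v})).IsHermitian) :
    (⨅ i, hQ.eigenvalues i) - 1 ≤ ⨅ i, hQv.eigenvalues i := by
  obtain ⟨w, hw⟩ := Fintype.exists_ne_of_one_lt_card (by rw [Fintype.card_fin]; omega) v
  have : Nonempty {w : Fin n | w ≠ v} := ⟨⟨w, hw⟩⟩
  exact_mod_cast iInf_eigenvalues_qMatrix_sub_le_induce G _ 1
    (fun a => card_le_one.mpr fun b hb c hc => by simp_all) hQ hQv
end

section
/- Let G be a graph in which d_u + d_v ≥ 6 for every edge uv. Then every negative adjacency eigenvalue of the second iterated line graph L²(G) equals −2, and the energy of L²(G) equals 4(n_2 − n_1), where n_1 and n_2 are the numbers of vertices of L(G) and L²(G) respectively. -/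
open scoped Classical

/-!
Let `B` be the vertex–edge incidence matrix of `H = L(G)`. Then `BᵀB = A(L²(G)) + 2I`, while
`BBᵀ = D_H + A_H = (D_H - 4I) + B_GᵀB_G + 2I`. The degree of `uv` in `H` is `d_u + d_v - 2 ≥ 4`,
so `BBᵀ - 2I` is positive semidefinite. A nonzero eigenvalue of `BᵀB` is one of `BBᵀ`, hence at
least `2`: every eigenvalue of `A(L²(G))` is `-2` or nonnegative. Since `BBᵀ` is invertible, `-2`
has multiplicity `n₂ - rank B = n₂ - n₁`, and as the trace vanishes the energy is twice the
absolute sum of the negative eigenvalues, `4 (n₂ - n₁)`.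
-/

namespace SimpleGraph

open Matrix Finset

def edgeIncMatrix {W : Type*} [DecidableEq W] (R : Type*) [Zero R] [One R] (H : SimpleGraph W) :
    Matrix W H.edgeSet R :=
  of fun w e => if w ∈ (e : Sym2 W) then 1 else 0

variable {W : Type*} [Fintype W] [DecidableEq W] {R : Type*} [NonAssocSemiring R]
  {H : SimpleGraph W}

lemma card_filter_mem_and_mem_of_ne {e f : H.edgeSet} (hef : e ≠ f) :
    #{w | w ∈ (e : Sym2 W) ∧ w ∈ (f : Sym2 W)} = if H.lineGraph.Adj e f then 1 else 0 := by
  simp only [lineGraph_adj_iff_exists, hef, ne_eq, not_false_eq_true, true_and]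
  split_ifs with h
  · obtain ⟨v, hve, hvf⟩ := h
    rw [card_eq_one]
    refine ⟨v, eq_singleton_iff_unique_mem.mpr ⟨by simp [hve, hvf], fun w hw => ?_⟩⟩
    simp only [mem_filter, mem_univ, true_and] at hw
    by_contra hwv
    exact hef (Subtype.ext (Sym2.eq_of_ne_mem hwv hw.1 hve hw.2 hvf))
  · rw [card_eq_zero, filter_eq_empty_iff]
    exact fun w _ hw => h ⟨w, hw⟩

lemma card_filter_mem_eq_two (e : H.edgeSet) : #{w | w ∈ (e : Sym2 W)} = 2 := by
  obtain ⟨e, he⟩ := e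
  induction e using Sym2.ind with
  | _ u v =>
    rw [← card_pair (H.ne_of_adj he)]
    congr 1
    ext w
    simp

lemma transpose_edgeIncMatrix_mul :
    (H.edgeIncMatrix R)ᵀ * H.edgeIncMatrix R = H.lineGraph.adjMatrix R + (2 : R) • 1 := by
  ext e f
  simp only [edgeIncMatrix, mul_apply, transpose_apply, of_apply, ite_zero_mul_ite_zero, mul_one,
    sum_boole, Matrix.add_apply, Matrix.smul_apply, one_apply, adjMatrix_apply]
  by_cases hef : e = f
  · subst hef
    simp [card_filter_mem_eq_two]
  · simp [hef, card_filter_mem_and_mem_of_ne hef, Nat.cast_ite]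

variable [DecidableRel H.Adj]

lemma card_filter_mem_edgeSet (u : W) : #{e : H.edgeSet | u ∈ (e : Sym2 W)} = H.degree u := by
  rw [← card_incidenceSet_eq_degree, ← Fintype.card_subtype]
  exact Fintype.card_congr (Equiv.subtypeSubtypeEquivSubtypeInter (· ∈ H.edgeSet) (u ∈ ·))

lemma card_filter_mem_and_mem_edgeSet {u v : W} (huv : u ≠ v) :
    #{e : H.edgeSet | u ∈ (e : Sym2 W) ∧ v ∈ (e : Sym2 W)} = if H.Adj u v then 1 else 0 := by
  simp_rw [Sym2.mem_and_mem_iff huv]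
  split_ifs with h
  · rw [card_eq_one]
    exact ⟨⟨s(u, v), h⟩, by ext e; simp [Subtype.ext_iff]⟩
  · rw [card_eq_zero, filter_eq_empty_iff]
    rintro ⟨e, he⟩ - rfl
    exact h he

lemma edgeIncMatrix_mul_transpose :
    H.edgeIncMatrix R * (H.edgeIncMatrix R)ᵀ =
      diagonal (fun u => (H.degree u : R)) + H.adjMatrix R := by
  ext u v
  simp only [edgeIncMatrix, mul_apply, transpose_apply, of_apply, ite_zero_mul_ite_zero, mul_one,
    sum_boole, Matrix.add_apply, diagonal_apply, adjMatrix_apply]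
  by_cases huv : u = v
  · subst huv
    simp [card_filter_mem_edgeSet]
  · simp [huv, card_filter_mem_and_mem_edgeSet huv, Nat.cast_ite]

lemma edgeIncMatrix_mulVec_one : H.edgeIncMatrix R *ᵥ 1 = fun u => (H.degree u : R) := by
  ext u
  simp [edgeIncMatrix, mulVec, dotProduct, sum_boole, card_filter_mem_edgeSet]

lemma lineGraph_degree_add_two {u v : W} (h : s(u, v) ∈ H.edgeSet) :
    H.lineGraph.degree ⟨s(u, v), h⟩ + 2 = H.degree u + H.degree v := by
  set B := H.edgeIncMatrix ℕ
  calc H.lineGraph.degree ⟨s(u, v), h⟩ + 2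
      = ((H.lineGraph.adjMatrix ℕ + (2 : ℕ) • 1) *ᵥ 1) ⟨s(u, v), h⟩ := by
        simp [add_mulVec, adjMatrix_mulVec_apply]
    _ = (Bᵀ *ᵥ (B *ᵥ 1)) ⟨s(u, v), h⟩ := by
        rw [mulVec_mulVec, transpose_edgeIncMatrix_mul]
    _ = ∑ w ∈ {u, v}, H.degree w := by
        have : ({u, v} : Finset W) = univ.filter (· ∈ s(u, v)) := by ext; simp
        rw [this, sum_filter, edgeIncMatrix_mulVec_one]
        simp [B, mulVec, dotProduct, edgeIncMatrix]
    _ = H.degree u + H.degree v := sum_pair (H.ne_of_adj h)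

lemma le_lineGraph_degree_add_two {k : ℕ}
    (hdeg : ∀ u v, H.Adj u v → k ≤ H.degree u + H.degree v) (e : H.edgeSet) :
    k ≤ H.lineGraph.degree e + 2 := by
  obtain ⟨e, he⟩ := e
  induction e using Sym2.ind with
  | _ u v => exact lineGraph_degree_add_two he ▸ hdeg u v he

lemma posSemidef_lineGraph_edgeIncMatrix_mul_transpose_sub {c : ℝ}
    (hdeg : ∀ e, c + 2 ≤ (H.lineGraph.degree e : ℝ)) :
    (H.lineGraph.edgeIncMatrix ℝ * (H.lineGraph.edgeIncMatrix ℝ)ᵀ - c • 1).PosSemidef := by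
  have h : H.lineGraph.edgeIncMatrix ℝ * (H.lineGraph.edgeIncMatrix ℝ)ᵀ - c • 1 =
      diagonal (fun e => (H.lineGraph.degree e : ℝ) - (c + 2)) +
        (H.edgeIncMatrix ℝ)ᵀ * H.edgeIncMatrix ℝ := by
    rw [edgeIncMatrix_mul_transpose, transpose_edgeIncMatrix_mul]
    ext e f
    by_cases hef : e = f
    · subst hef; simp; ring
    · simp [hef]
  rw [h]
  exact (PosSemidef.diagonal fun e => sub_nonneg.2 (hdeg e)).add
    (by simpa using posSemidef_conjTranspose_mul_self (H.edgeIncMatrix ℝ))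

end SimpleGraph

namespace Matrix

open Finset

variable {m n : Type*} [Fintype m] [Fintype n]

lemma eq_zero_or_le_of_transpose_mul_mulVec [DecidableEq m] {B : Matrix m n ℝ} {c μ : ℝ}
    (hB : (B * Bᵀ - c • 1).PosSemidef) {x : n → ℝ} (hx : x ≠ 0)
    (hμ : (Bᵀ * B) *ᵥ x = μ • x) : μ = 0 ∨ c ≤ μ := by
  refine or_iff_not_imp_left.2 fun hμ0 => ?_
  rw [← mulVec_mulVec] at hμ
  have hy : B *ᵥ x ≠ 0 := by
    intro hy
    rw [hy, mulVec_zero, eq_comm, smul_eq_zero] at hμ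
    exact hx (hμ.resolve_left hμ0)
  have hBy : (B * Bᵀ) *ᵥ (B *ᵥ x) = μ • (B *ᵥ x) := by
    rw [← mulVec_mulVec, hμ, mulVec_smul]
  have h := hB.dotProduct_mulVec_nonneg (B *ᵥ x)
  rw [sub_mulVec, hBy, smul_mulVec, one_mulVec, ← sub_smul, dotProduct_smul, smul_eq_mul] at h
  nlinarith [dotProduct_star_self_pos_iff.2 hy]

lemma IsHermitian.eigenvalues_eq_neg_or_le [DecidableEq m] [DecidableEq n] {A : Matrix n n ℝ}
    (hA : A.IsHermitian) {B : Matrix m n ℝ} {c d : ℝ} (hAB : A + c • 1 = Bᵀ * B)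
    (hB : (B * Bᵀ - d • 1).PosSemidef) (i : n) :
    hA.eigenvalues i = -c ∨ d - c ≤ hA.eigenvalues i := by
  have hv : (⇑(hA.eigenvectorBasis i) : n → ℝ) ≠ 0 :=
    (WithLp.ofLp_eq_zero 2).ne.2 (hA.eigenvectorBasis.orthonormal.ne_zero i)
  refine (eq_zero_or_le_of_transpose_mul_mulVec (μ := hA.eigenvalues i + c) hB hv ?_).imp
    (fun h => by linarith) fun h => by linarith
  rw [← hAB, add_mulVec, hA.mulVec_eigenvectorBasis, smul_mulVec, one_mulVec, add_smul]

lemma rank_eq_card_of_posSemidef_mul_transpose_sub [DecidableEq m] {B : Matrix m n ℝ} {c : ℝ}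
    (hc : 0 < c) (hB : (B * Bᵀ - c • 1).PosSemidef) : B.rank = Fintype.card m := by
  have hpos : (B * Bᵀ).PosDef := by
    simpa using PosDef.posSemidef_add hB (PosDef.one.smul hc)
  rw [← rank_self_mul_transpose, rank_of_isUnit _ hpos.isUnit]

lemma IsHermitian.rank_add_smul_one [DecidableEq n] {A : Matrix n n ℝ} (hA : A.IsHermitian)
    (c : ℝ) : (A + c • 1).rank = Fintype.card {i // hA.eigenvalues i + c ≠ 0} := by
  conv_lhs => rw [hA.spectral_theorem,
    ← map_one (Unitary.conjStarAlgAut ℝ _ hA.eigenvectorUnitary), ← map_smul, ← map_add,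
    Unitary.conjStarAlgAut_apply]
  rw [← Unitary.coe_star]
  simp [-isUnit_iff_ne_zero, -Unitary.coe_star, smul_one_eq_diagonal, diagonal_add, rank_diagonal]

lemma IsHermitian.sum_abs_eigenvalues_eq [DecidableEq n] {A : Matrix n n ℝ} (hA : A.IsHermitian)
    (htr : A.trace = 0) {c : ℝ} (hc : 0 < c)
    (hneg : ∀ i, hA.eigenvalues i < 0 → hA.eigenvalues i = -c) :
    ∑ i, |hA.eigenvalues i| = 2 * c * Fintype.card {i // hA.eigenvalues i = -c} := by
  have habs : ∀ i, |hA.eigenvalues i| =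
      hA.eigenvalues i + if hA.eigenvalues i = -c then 2 * c else 0 := by
    intro i
    split_ifs with h
    · rw [h, abs_neg, abs_of_pos hc]; ring
    · rw [abs_of_nonneg (not_lt.1 (mt (hneg i) h)), add_zero]
  have hsum : ∑ i, hA.eigenvalues i = 0 := by
    simpa [htr] using hA.trace_eq_sum_eigenvalues.symm
  rw [sum_congr rfl fun i _ => habs i, sum_add_distrib, hsum, ← sum_filter, sum_const,
    Fintype.card_subtype]
  simp [mul_comm]

end Matrix

open SimpleGraph Matrix in
theorem iterated_lineGraph_property_rho_energy {V : Type*} [Fintype V] [DecidableEq V]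
    (G : SimpleGraph V) [DecidableRel G.Adj]
    (hdeg : ∀ u v, G.Adj u v → 6 ≤ G.degree u + G.degree v)
    (hH : ((G.lineGraph.lineGraph).adjMatrix ℝ).IsHermitian) :
    (∀ i, hH.eigenvalues i < 0 → hH.eigenvalues i = -2) ∧
      ∑ i, |hH.eigenvalues i| =
        4 * ((Fintype.card (G.lineGraph).edgeSet : ℝ) - (Fintype.card G.edgeSet : ℝ)) := by
  set B := G.lineGraph.edgeIncMatrix ℝ
  have hAB : G.lineGraph.lineGraph.adjMatrix ℝ + (2 : ℝ) • 1 = Bᵀ * B :=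
    transpose_edgeIncMatrix_mul.symm
  have hdeg' : ∀ e, 4 ≤ G.lineGraph.degree e := fun e => by
    have := le_lineGraph_degree_add_two hdeg e
    omega
  have hB : (B * Bᵀ - (2 : ℝ) • 1).PosSemidef :=
    posSemidef_lineGraph_edgeIncMatrix_mul_transpose_sub fun e => by
      norm_num
      exact_mod_cast hdeg' e
  have hneg : ∀ i, hH.eigenvalues i < 0 → hH.eigenvalues i = -2 := fun i hi =>
    (hH.eigenvalues_eq_neg_or_le hAB hB i).resolve_right (by linarith)
  have hrank : Fintype.card {i // hH.eigenvalues i + 2 ≠ 0} = Fintype.card G.edgeSet := by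
    rw [← hH.rank_add_smul_one, hAB, rank_transpose_mul_self,
      rank_eq_card_of_posSemidef_mul_transpose_sub two_pos hB]
  have hcount : Fintype.card {i // hH.eigenvalues i = -2} + Fintype.card G.edgeSet =
      Fintype.card G.lineGraph.edgeSet := by
    simp_rw [ne_eq, add_eq_zero_iff_eq_neg] at hrank
    rw [← hrank, Fintype.card_subtype_compl, Nat.add_sub_cancel' (Fintype.card_subtype_le _)]
  refine ⟨hneg, ?_⟩
  rw [hH.sum_abs_eigenvalues_eq (trace_adjMatrix ..) two_pos hneg, ← hcount]
  push_cast
  ring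
end

section
/- Let G be a graph on n vertices whose adjacency eigenvalues satisfy: all negative eigenvalues equal −2, with multiplicity k, and every eigenvector for the eigenvalue −2 is orthogonal to the all-ones vector. Then 1 is an eigenvalue of the complement \bar{G} with multiplicity at least k, and \bar{G} has at most two distinct positive eigenvalues. -/
/-!
Write `A` and `Ā = J - I - A` for the adjacency matrices of `G` and its complement. On vectors
with coordinate sum zero, `Ā` acts as `-I - A`; hence every `(-2)`-eigenvector of `A` is a
`1`-eigenvector of `Ā`, which gives the multiplicity bound. Since `-2` is the only negative
eigenvalue of `A`, the form `wᵀ A w` is nonnegative on the orthogonal complement of the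
`(-2)`-eigenspace, so `wᵀ Ā w < 0` for every nonzero sum-zero `w` in that complement. Two
eigenvectors of `Ā` for distinct nonnegative eigenvalues other than `1` lie in that complement and
span a plane on which `wᵀ Ā w ≥ 0`; that plane meets the sum-zero hyperplane nontrivially, a
contradiction. So at most one positive eigenvalue of `Ā` differs from `1`.
-/

open Matrix
open scoped Classical

theorem Finset.card_le_two_of_forall_ne_eq {α : Type*} [DecidableEq α] {s : Finset α} {c : α}
    (h : ∀ a ∈ s, ∀ b ∈ s, a ≠ c → b ≠ c → a = b) : s.card ≤ 2 := by
  have herase : (s.erase c).card ≤ 1 := Finset.card_le_one.mpr fun a ha b hb =>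
    h a (Finset.mem_of_mem_erase ha) b (Finset.mem_of_mem_erase hb) (Finset.ne_of_mem_erase ha)
      (Finset.ne_of_mem_erase hb)
  have := Finset.pred_card_le_card_erase (s := s) (a := c)
  omega

namespace Matrix

theorem IsSymm.dotProduct_mulVec {n R : Type*} [Fintype n] [CommSemiring R]
    {M : Matrix n n R} (hM : M.IsSymm) (x y : n → R) : x ⬝ᵥ (M *ᵥ y) = (M *ᵥ x) ⬝ᵥ y := by
  rw [Matrix.dotProduct_mulVec, ← mulVec_transpose, hM]

theorem IsSymm.dotProduct_eq_zero_of_mulVec_eq_smul {n R : Type*} [Fintype n]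
    [CommRing R] [IsDomain R] {M : Matrix n n R} (hM : M.IsSymm) {x y : n → R} {a b : R}
    (hx : M *ᵥ x = a • x) (hy : M *ᵥ y = b • y) (hab : a ≠ b) : x ⬝ᵥ y = 0 := by
  have heq : a * (x ⬝ᵥ y) = b * (x ⬝ᵥ y) := calc
    a * (x ⬝ᵥ y) = (M *ᵥ x) ⬝ᵥ y := by rw [hx, smul_dotProduct, smul_eq_mul]
    _ = x ⬝ᵥ (M *ᵥ y) := (hM.dotProduct_mulVec x y).symm
    _ = b * (x ⬝ᵥ y) := by rw [hy, dotProduct_smul, smul_eq_mul]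
  by_contra hxy
  exact hab (mul_right_cancel₀ hxy heq)

section OrderedField

variable {n R : Type*} [Fintype n] [Field R] [LinearOrder R] [IsStrictOrderedRing R]

theorem exists_ne_zero_mem_span_pair_sum_eq_zero {u v : n → R} (hu : u ≠ 0) (hv : v ≠ 0)
    (huv : u ⬝ᵥ v = 0) : ∃ w ∈ Submodule.span R {u, v}, w ≠ 0 ∧ ∑ i, w i = 0 := by
  by_cases hsu : ∑ i, u i = 0
  · exact ⟨u, Submodule.subset_span (by simp), hu, hsu⟩
  refine ⟨(∑ i, v i) • u - (∑ i, u i) • v, Submodule.mem_span_pair.mpr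
    ⟨∑ i, v i, -(∑ i, u i), by rw [neg_smul, ← sub_eq_add_neg]⟩, fun hw => hv ?_, ?_⟩
  · have hwv := congrArg (· ⬝ᵥ v) hw
    simpa only [sub_dotProduct, smul_dotProduct, huv, smul_eq_mul, mul_zero, zero_sub,
      zero_dotProduct, neg_eq_zero, mul_eq_zero, hsu, false_or, dotProduct_self_eq_zero] using hwv
  · simp only [Pi.sub_apply, Pi.smul_apply, smul_eq_mul, Finset.sum_sub_distrib,
      ← Finset.mul_sum]
    ring

theorem dotProduct_mulVec_self_nonneg_of_mem_span_pair {M : Matrix n n R} {u v : n → R}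
    {p q : R} (hu : M *ᵥ u = p • u) (hv : M *ᵥ v = q • v) (huv : u ⬝ᵥ v = 0) (hp : 0 ≤ p)
    (hq : 0 ≤ q) {w : n → R} (hw : w ∈ Submodule.span R {u, v}) : 0 ≤ w ⬝ᵥ (M *ᵥ w) := by
  obtain ⟨a, b, rfl⟩ := Submodule.mem_span_pair.mp hw
  have hvu : v ⬝ᵥ u = 0 := by rw [dotProduct_comm, huv]
  simp only [mulVec_add, mulVec_smul, hu, hv, add_dotProduct, dotProduct_add, smul_dotProduct,
    dotProduct_smul, huv, hvu, smul_eq_mul]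
  have hu2 : 0 ≤ u ⬝ᵥ u := Finset.sum_nonneg fun i _ => mul_self_nonneg (u i)
  have hv2 : 0 ≤ v ⬝ᵥ v := Finset.sum_nonneg fun i _ => mul_self_nonneg (v i)
  nlinarith [mul_nonneg (mul_nonneg hp (mul_self_nonneg a)) hu2,
    mul_nonneg (mul_nonneg hq (mul_self_nonneg b)) hv2]

theorem IsSymm.eigenvalue_eq_of_neg_on_sum_eq_zero {M : Matrix n n R} (hM : M.IsSymm)
    {u v : n → R} {p q : R} (hu : M *ᵥ u = p • u) (hv : M *ᵥ v = q • v) (hu0 : u ≠ 0)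
    (hv0 : v ≠ 0) (hp : 0 ≤ p) (hq : 0 ≤ q)
    (hneg : ∀ w ∈ Submodule.span R {u, v}, w ≠ 0 → ∑ i, w i = 0 → w ⬝ᵥ (M *ᵥ w) < 0) :
    p = q := by
  by_contra hpq
  have huv := hM.dotProduct_eq_zero_of_mulVec_eq_smul hu hv hpq
  obtain ⟨w, hw, hw0, hsum⟩ := exists_ne_zero_mem_span_pair_sum_eq_zero hu0 hv0 huv
  exact (hneg w hw hw0 hsum).not_ge
    (dotProduct_mulVec_self_nonneg_of_mem_span_pair hu hv huv hp hq hw)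

end OrderedField

namespace IsHermitian

variable {n : Type*} [Fintype n] [DecidableEq n]

theorem ofLp_eigenvectorBasis_ne_zero {𝕜 : Type*} [RCLike 𝕜] {A : Matrix n n 𝕜}
    (hA : A.IsHermitian) (i : n) : ⇑(hA.eigenvectorBasis i) ≠ 0 :=
  (WithLp.ofLp_eq_zero 2).ne.2 (hA.eigenvectorBasis.orthonormal.ne_zero i)

theorem card_filter_eigenvalues_eq {𝕜 : Type*} [RCLike 𝕜] {A : Matrix n n 𝕜}
    (hA : A.IsHermitian) (μ : ℝ) :
    (Finset.univ.filter fun i => hA.eigenvalues i = μ).card =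
      Module.finrank 𝕜 (Module.End.eigenspace (toEuclideanLin A) μ) := by
  rw [← (isSymmetric_toEuclideanLin_iff.mpr hA).card_filter_eigenvalues_eq finrank_euclideanSpace]
  apply Finset.card_equiv (Fintype.equivOfCardEq (Fintype.card_fin _)).symm
  intro i
  simp only [Finset.mem_filter, Finset.mem_univ, true_and]
  simp [eigenvalues, eigenvalues₀]

theorem dotProduct_mulVec_self_eq_sum {M : Matrix n n ℝ} (hM : M.IsHermitian) (w : n → ℝ) :
    w ⬝ᵥ (M *ᵥ w) = ∑ i, hM.eigenvalues i * (⇑(hM.eigenvectorBasis i) ⬝ᵥ w) ^ 2 := by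
  have parseval := hM.eigenvectorBasis.sum_inner_mul_inner
    (WithLp.toLp 2 (M *ᵥ w)) (WithLp.toLp 2 w)
  simp only [EuclideanSpace.inner_eq_star_dotProduct, star_trivial] at parseval
  rw [← parseval]
  refine Finset.sum_congr rfl fun i _ => ?_
  rw [(isHermitian_iff_isSymm.mp hM).dotProduct_mulVec, mulVec_eigenvectorBasis,
    smul_dotProduct, smul_eq_mul, dotProduct_comm w]
  ring

theorem dotProduct_mulVec_self_nonneg {M : Matrix n n ℝ} (hM : M.IsHermitian) {w : n → ℝ}
    (hw : ∀ i, hM.eigenvalues i < 0 → ⇑(hM.eigenvectorBasis i) ⬝ᵥ w = 0) :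
    0 ≤ w ⬝ᵥ (M *ᵥ w) := by
  rw [hM.dotProduct_mulVec_self_eq_sum]
  refine Finset.sum_nonneg fun i _ => ?_
  rcases lt_or_ge (hM.eigenvalues i) 0 with hneg | hnonneg
  · simp [hw i hneg]
  · positivity

end IsHermitian

end Matrix

namespace SimpleGraph

variable {V R : Type*} [Fintype V] [DecidableEq V] (G : SimpleGraph V) [DecidableRel G.Adj]

theorem adjMatrix_compl_mulVec_of_sum_eq_zero [Ring R] {x : V → R} (hx : ∑ i, x i = 0) :
    Gᶜ.adjMatrix R *ᵥ x = -x - G.adjMatrix R *ᵥ x := by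
  have h := G.one_add_adjMatrix_add_compl_adjMatrix_eq_of_one (α := R)
  rw [compl_adjMatrix_eq_adjMatrix_compl, ← eq_sub_iff_add_eq'] at h
  have hJ : (of 1 : Matrix V V R) *ᵥ x = 0 := by
    ext i; simp [mulVec, dotProduct, hx]
  rw [h, sub_mulVec, add_mulVec, hJ, one_mulVec]
  abel

theorem adjMatrix_compl_mulVec_eq_smul [Ring R] {x : V → R} {μ : R}
    (hx : G.adjMatrix R *ᵥ x = μ • x) (hsum : ∑ i, x i = 0) :
    Gᶜ.adjMatrix R *ᵥ x = (-1 - μ) • x := by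
  rw [G.adjMatrix_compl_mulVec_of_sum_eq_zero hsum, hx, sub_smul, neg_smul, one_smul,
    sub_eq_add_neg]

theorem eigenspace_le_eigenspace_compl {μ : ℝ}
    (hsum : ∀ x : V → ℝ, G.adjMatrix ℝ *ᵥ x = μ • x → ∑ i, x i = 0) :
    Module.End.eigenspace (toEuclideanLin (G.adjMatrix ℝ)) μ ≤
      Module.End.eigenspace (toEuclideanLin (Gᶜ.adjMatrix ℝ)) (-1 - μ) := by
  intro x hx
  rw [Module.End.mem_eigenspace_iff] at hx ⊢
  have hx' : G.adjMatrix ℝ *ᵥ x.ofLp = μ • x.ofLp := congrArg WithLp.ofLp hx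
  exact congrArg (WithLp.toLp 2) (G.adjMatrix_compl_mulVec_eq_smul hx' (hsum _ hx'))

theorem dotProduct_adjMatrix_compl_mulVec_neg (hA : (G.adjMatrix ℝ).IsHermitian) {w : V → ℝ}
    (hw : ∀ i, hA.eigenvalues i < 0 → ⇑(hA.eigenvectorBasis i) ⬝ᵥ w = 0) (hw0 : w ≠ 0)
    (hsum : ∑ i, w i = 0) : w ⬝ᵥ (Gᶜ.adjMatrix ℝ *ᵥ w) < 0 := by
  have hA_nonneg := hA.dotProduct_mulVec_self_nonneg hw
  have hw_pos : 0 < w ⬝ᵥ w := by simpa using dotProduct_self_star_pos_iff.mpr hw0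
  rw [G.adjMatrix_compl_mulVec_of_sum_eq_zero hsum, dotProduct_sub, dotProduct_neg]
  linarith

section NegativeEigenvaluesMinusTwo

variable {G} (hA : (G.adjMatrix ℝ).IsHermitian) (hAc : (Gᶜ.adjMatrix ℝ).IsHermitian)
  (hneg : ∀ i, hA.eigenvalues i < 0 → hA.eigenvalues i = -2)
  (horth : ∀ x : V → ℝ, G.adjMatrix ℝ *ᵥ x = (-2 : ℝ) • x → ∑ i, x i = 0)
include hA hAc hneg horth

theorem card_eigenvalues_neg_le_card_compl_eigenvalues_eq_one :
    (Finset.univ.filter fun i => hA.eigenvalues i < 0).card ≤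
      (Finset.univ.filter fun i => hAc.eigenvalues i = 1).card := calc
  _ = (Finset.univ.filter fun i => hA.eigenvalues i = -2).card := by
    congr 1
    ext i
    simpa using ⟨hneg i, fun h => h ▸ by norm_num⟩
  _ = Module.finrank ℝ (Module.End.eigenspace (toEuclideanLin (G.adjMatrix ℝ)) (-2)) :=
    hA.card_filter_eigenvalues_eq (-2)
  _ ≤ Module.finrank ℝ (Module.End.eigenspace (toEuclideanLin (Gᶜ.adjMatrix ℝ)) 1) := by
    have hle := G.eigenspace_le_eigenspace_compl horth
    norm_num at hle
    exact Submodule.finrank_mono hle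
  _ = _ := (hAc.card_filter_eigenvalues_eq 1).symm

theorem eigenvectorBasis_dotProduct_compl_eigenvectorBasis_eq_zero {k l : V}
    (hk : hA.eigenvalues k < 0) (hl : hAc.eigenvalues l ≠ 1) :
    ⇑(hA.eigenvectorBasis k) ⬝ᵥ ⇑(hAc.eigenvectorBasis l) = 0 := by
  have hAk : G.adjMatrix ℝ *ᵥ ⇑(hA.eigenvectorBasis k) = (-2 : ℝ) • ⇑(hA.eigenvectorBasis k) := by
    rw [hA.mulVec_eigenvectorBasis, hneg k hk]
  refine (isHermitian_iff_isSymm.mp hAc).dotProduct_eq_zero_of_mulVec_eq_smul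
    (G.adjMatrix_compl_mulVec_eq_smul hAk (horth _ hAk)) (hAc.mulVec_eigenvectorBasis l) ?_
  norm_num
  exact hl.symm

theorem compl_eigenvalues_eq_of_nonneg_of_ne_one {i j : V} (hi : 0 ≤ hAc.eigenvalues i)
    (hj : 0 ≤ hAc.eigenvalues j) (hi1 : hAc.eigenvalues i ≠ 1) (hj1 : hAc.eigenvalues j ≠ 1) :
    hAc.eigenvalues i = hAc.eigenvalues j := by
  refine (isHermitian_iff_isSymm.mp hAc).eigenvalue_eq_of_neg_on_sum_eq_zero
    (hAc.mulVec_eigenvectorBasis i) (hAc.mulVec_eigenvectorBasis j)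
    (hAc.ofLp_eigenvectorBasis_ne_zero i) (hAc.ofLp_eigenvectorBasis_ne_zero j) hi hj ?_
  intro w hw hw0 hsum
  refine G.dotProduct_adjMatrix_compl_mulVec_neg hA (fun k hk => ?_) hw0 hsum
  obtain ⟨a, b, rfl⟩ := Submodule.mem_span_pair.mp hw
  simp [dotProduct_add, dotProduct_smul,
    eigenvectorBasis_dotProduct_compl_eigenvectorBasis_eq_zero hA hAc hneg horth hk hi1,
    eigenvectorBasis_dotProduct_compl_eigenvectorBasis_eq_zero hA hAc hneg horth hk hj1]

end NegativeEigenvaluesMinusTwo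

end SimpleGraph

theorem complement_two_positive_eigenvalues {n : ℕ}
    (G : SimpleGraph (Fin n)) [DecidableRel G.Adj]
    (hA : (G.adjMatrix ℝ).IsHermitian) (hAc : ((Gᶜ).adjMatrix ℝ).IsHermitian)
    (hneg : ∀ i, hA.eigenvalues i < 0 → hA.eigenvalues i = -2)
    (horth : ∀ Y : Fin n → ℝ, G.adjMatrix ℝ *ᵥ Y = (-2 : ℝ) • Y → ∑ i, Y i = 0) :
    (Finset.univ.filter fun i => hA.eigenvalues i < 0).card ≤
        (Finset.univ.filter fun i => hAc.eigenvalues i = 1).card ∧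
      ((Finset.univ.filter fun i => 0 < hAc.eigenvalues i).image hAc.eigenvalues).card ≤ 2 := by
  refine ⟨G.card_eigenvalues_neg_le_card_compl_eigenvalues_eq_one hA hAc hneg horth, ?_⟩
  refine Finset.card_le_two_of_forall_ne_eq (c := 1) fun a ha b hb ha1 hb1 => ?_
  obtain ⟨i, hi, rfl⟩ := Finset.mem_image.mp ha
  obtain ⟨j, hj, rfl⟩ := Finset.mem_image.mp hb
  exact G.compl_eigenvalues_eq_of_nonneg_of_ne_one hA hAc hneg horth
    (Finset.mem_filter.mp hi).2.le (Finset.mem_filter.mp hj).2.le ha1 hb1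
end

section
/- Let n ≥ 6 and let Ka_n(n−4) be the graph obtained from the complete graph K_n by deleting n−4 edges all incident to a single vertex. Then every signless Laplacian eigenvalue of Ka_n(n−4) is at least 2; in particular the least one is n − 1/2 − (1/2)√(4n(n−7)+73) ≥ 2. -/
open scoped Classical

/-- The graph `Ka_n(p)`: the complete graph on `Fin n` with the edges from the vertex `v0` to
the vertices of `S` deleted. -/
def kan {n : ℕ} (v0 : Fin n) (S : Finset (Fin n)) : SimpleGraph (Fin n) where
  Adj u v := u ≠ v ∧ ¬(u = v0 ∧ v ∈ S) ∧ ¬(v = v0 ∧ u ∈ S)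
  symm := ⟨by rintro u v ⟨h1, h2, h3⟩; exact ⟨h1.symm, h3, h2⟩⟩
  loopless := ⟨by rintro v ⟨h, _⟩; exact h rfl⟩

/-! `Ka_n(n-4)` is the join of cliques `P₃[K₁, K₃, K_{n-4}]` along the partition
`{v0}`, common neighbours, `S`. For any join of cliques, `x • 1 - Q` is a diagonal matrix that is
constant on the classes plus a matrix that is constant on blocks, of rank at most the number of
classes; the matrix determinant lemma then gives
`charpoly Q = ∏_c (X - (d_c - 1)) ^ (|c| - 1) * charpoly B`, with `B` the quotient matrix.
Here this is `(X - (n-2))² (X - (n-3))^(n-5) charpoly B` and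
`charpoly B = (X - (n-2)) (X² - (2n-1) X + 6n - 18)`, whose smaller root is at least `2`
because `√(4n(n-7)+73) ≤ 2n - 5` for `n ≥ 6`. -/

open Polynomial Matrix Finset

section Lumping

variable {ι κ : Type*} [Fintype κ] [DecidableEq κ]

theorem prod_comp_eq_prod_pow_card [Fintype ι] {M : Type*} [CommMonoid M] (π : ι → κ)
    (f : κ → M) : ∏ i, f (π i) = ∏ c, f c ^ #{i | π i = c} := by
  rw [← Finset.prod_fiberwise' univ π f]
  exact Finset.prod_congr rfl fun c _ => Finset.prod_const _

theorem sum_comp_eq_sum_card_mul [Fintype ι] {R : Type*} [NonAssocSemiring R] (π : ι → κ)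
    (f : κ → R) : ∑ i, f (π i) = ∑ c, (#{i | π i = c} : R) * f c := by
  rw [← Finset.sum_fiberwise' univ π f]
  exact Finset.sum_congr rfl fun c _ => by rw [Finset.sum_const, nsmul_eq_mul]

theorem submatrix_eq_submatrix_one_mul {R : Type*} [CommRing R] (π : ι → κ) (M : Matrix κ κ R) :
    M.submatrix π π = (1 : Matrix κ κ R).submatrix π id * M.submatrix id π := by
  ext i j
  simp [Matrix.mul_apply, Matrix.one_apply]

theorem det_diagonal_comp_add_submatrix [Fintype ι] [DecidableEq ι] {K : Type*} [Field K]
    (π : ι → κ) (hπ : ∀ c, 0 < #{i | π i = c}) (δ : κ → K) (hδ : ∀ c, δ c ≠ 0)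
    (M : Matrix κ κ K) :
    det (diagonal (δ ∘ π) + M.submatrix π π)
      = (∏ c, δ c ^ (#{i | π i = c} - 1)) *
          det (diagonal δ + M * diagonal fun c => (#{i | π i = c} : K)) := by
  set m : κ → K := fun c => (#{i | π i = c} : K)
  have hdet : det (diagonal (δ ∘ π)) = ∏ c, δ c ^ #{i | π i = c} := by
    rw [det_diagonal]; exact prod_comp_eq_prod_pow_card π δ
  have hunit : IsUnit (det (diagonal (δ ∘ π))) := by
    rw [hdet]; exact IsUnit.mk0 _ (prod_ne_zero_iff.2 fun c _ => pow_ne_zero _ (hδ c))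
  have hlump : M.submatrix id π * (diagonal (δ ∘ π))⁻¹ * (1 : Matrix κ κ K).submatrix π id
      = M * diagonal (m / δ) := by
    have hinv : (diagonal (δ ∘ π))⁻¹ = diagonal fun i => (δ (π i))⁻¹ :=
      inv_eq_right_inv (by rw [diagonal_mul_diagonal]; simp [hδ])
    ext c c'
    rw [hinv]
    simp only [Matrix.mul_apply, submatrix_apply, id, diagonal_apply, one_apply, mul_ite,
      mul_zero, mul_one, Finset.sum_ite_eq', Finset.mem_univ, if_true, Pi.div_apply, m]
    rw [← Finset.sum_filter, Finset.sum_congr rfl fun j hj => by rw [(Finset.mem_filter.1 hj).2], Finset.sum_const,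
      nsmul_eq_mul]
    ring
  have hδm : diagonal (m / δ) * diagonal δ = diagonal m := by
    rw [diagonal_mul_diagonal]; congr 1; ext c; exact div_mul_cancel₀ _ (hδ c)
  have hpow : ∀ c, δ c ^ #{i | π i = c} = δ c ^ (#{i | π i = c} - 1) * δ c := fun c => by
    rw [← pow_succ, Nat.sub_add_cancel (hπ c)]
  calc det (diagonal (δ ∘ π) + M.submatrix π π)
      = det (diagonal (δ ∘ π)) * det (1 + M * diagonal (m / δ)) := by
        rw [submatrix_eq_submatrix_one_mul, det_add_mul _ _ hunit, hlump]
    _ = (∏ c, δ c ^ (#{i | π i = c} - 1)) * det ((1 + M * diagonal (m / δ)) * diagonal δ) := by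
        rw [hdet, det_mul, det_diagonal, Finset.prod_congr rfl fun c _ => hpow c,
          prod_mul_distrib]; ring
    _ = _ := by rw [Matrix.add_mul, Matrix.one_mul, Matrix.mul_assoc, hδm]

end Lumping

section CliqueJoin

variable {V κ : Type*} [Fintype V] [DecidableEq V] [Fintype κ] [DecidableEq κ]

noncomputable def classSizes (π : V → κ) : κ → ℝ := fun c => (#{v | π v = c} : ℝ)

/-- The quotient matrix of `qMatrix G` for the equitable partition `π` when
`G.adjMatrix ℝ = M.submatrix π π - 1`: a vertex of class `c` then has degree
`(M *ᵥ classSizes π) c - 1`. -/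
noncomputable def quotientQMatrix (π : V → κ) (M : Matrix κ κ ℝ) : Matrix κ κ ℝ :=
  diagonal (fun c => (M *ᵥ classSizes π) c - 2) + M * diagonal (classSizes π)

theorem qMatrix_eq_diagonal_add (G : SimpleGraph V) :
    qMatrix G = diagonal (fun v => (G.degree v : ℝ)) + G.adjMatrix ℝ := by
  rw [qMatrix]; congr; exact Subsingleton.elim _ _

theorem degree_eq_of_adjMatrix_eq_submatrix {G : SimpleGraph V} {π : V → κ} {M : Matrix κ κ ℝ}
    (hG : G.adjMatrix ℝ = M.submatrix π π - 1) (v : V) :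
    (G.degree v : ℝ) = (M *ᵥ classSizes π) (π v) - 1 := by
  have h := G.adjMatrix_mulVec_const_apply (α := ℝ) (a := 1) (v := v)
  rw [mul_one, hG, sub_mulVec, Pi.sub_apply, one_mulVec] at h
  rw [← h, mulVec, dotProduct, mulVec, dotProduct]
  simp only [submatrix_apply, Function.const_apply, mul_one, classSizes]
  rw [sum_comp_eq_sum_card_mul π (M (π v))]
  simp_rw [mul_comm]

theorem scalar_sub_qMatrix_eq_of_adjMatrix_eq_submatrix {G : SimpleGraph V} {π : V → κ}
    {M : Matrix κ κ ℝ} (hG : G.adjMatrix ℝ = M.submatrix π π - 1) (x : ℝ) :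
    scalar V x - qMatrix G
      = diagonal ((fun c => x + 2 - (M *ᵥ classSizes π) c) ∘ π) + (-M).submatrix π π := by
  rw [qMatrix_eq_diagonal_add, hG]
  ext u w
  by_cases huw : u = w
  · subst huw; simp [degree_eq_of_adjMatrix_eq_submatrix hG]; ring
  · simp [huw]

theorem charpoly_qMatrix_eq_of_adjMatrix_eq_submatrix (G : SimpleGraph V) (π : V → κ)
    (hπ : ∀ c, 0 < #{v | π v = c}) (M : Matrix κ κ ℝ) (hG : G.adjMatrix ℝ = M.submatrix π π - 1) :
    (qMatrix G).charpoly
      = (∏ c, (X - C ((M *ᵥ classSizes π) c - 2)) ^ (#{v | π v = c} - 1)) *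
          (quotientQMatrix π M).charpoly := by
  refine eq_of_infinite_eval_eq _ _
    ((Set.finite_range fun c => (M *ᵥ classSizes π) c - 2).infinite_compl.mono fun x hx => ?_)
  have hδ : ∀ c, x + 2 - (M *ᵥ classSizes π) c ≠ 0 := fun c h =>
    hx ⟨c, by simp only at h ⊢; linarith⟩
  simp only [Set.mem_ofPred_eq, eval_charpoly, eval_mul, eval_prod, eval_pow, eval_sub, eval_X,
    eval_C, scalar_sub_qMatrix_eq_of_adjMatrix_eq_submatrix hG,
    det_diagonal_comp_add_submatrix π hπ _ hδ]
  congr 1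
  · exact Finset.prod_congr rfl fun c _ => by ring_nf
  · congr 1
    ext c c'
    by_cases h : c = c'
    · subst h; simp [quotientQMatrix, classSizes]; ring
    · simp [quotientQMatrix, classSizes, h]

end CliqueJoin

section Kan

variable {n : ℕ} {v0 : Fin n} {S : Finset (Fin n)}

/-- Class `0` is `v0`, class `1` the common neighbours, class `2` is `S`: the order of the
paper's quotient matrix. -/
def kanPart (v0 : Fin n) (S : Finset (Fin n)) (v : Fin n) : Fin 3 :=
  if v = v0 then 0 else if v ∈ S then 2 else 1

def kanJoinMatrix : Matrix (Fin 3) (Fin 3) ℝ := !![1, 1, 0; 1, 1, 1; 0, 1, 1]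

theorem adjMatrix_kan (hv0 : v0 ∉ S) :
    (kan v0 S).adjMatrix ℝ = kanJoinMatrix.submatrix (kanPart v0 S) (kanPart v0 S) - 1 := by
  ext u w
  have hS0 : ∀ v ∈ S, v ≠ v0 := fun v hv h => hv0 (h ▸ hv)
  by_cases huw : u = w
  · subst huw
    by_cases hu : u = v0 <;> by_cases huS : u ∈ S <;> simp [kanPart, kanJoinMatrix, kan, hu, huS]
  · by_cases hu : u = v0 <;> by_cases hw : w = v0 <;> by_cases huS : u ∈ S <;>
      by_cases hwS : w ∈ S <;> simp_all [kanPart, kanJoinMatrix, kan, one_apply]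

theorem kanPart_eq_zero_iff {v : Fin n} : kanPart v0 S v = 0 ↔ v = v0 := by
  unfold kanPart; split_ifs <;> simp_all

theorem kanPart_eq_one_iff {v : Fin n} : kanPart v0 S v = 1 ↔ v ∉ insert v0 S := by
  unfold kanPart; split_ifs <;> simp_all

theorem kanPart_eq_two_iff (hv0 : v0 ∉ S) {v : Fin n} : kanPart v0 S v = 2 ↔ v ∈ S := by
  unfold kanPart; split_ifs <;> simp_all

theorem card_kanPart_fiber (hv0 : v0 ∉ S) (c : Fin 3) :
    #{v | kanPart v0 S v = c} = ![1, n - 1 - #S, #S] c := by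
  have h0 : ({v | kanPart v0 S v = 0} : Finset (Fin n)) = {v0} := by
    ext; simp [kanPart_eq_zero_iff]
  have h1 : ({v | kanPart v0 S v = 1} : Finset (Fin n)) = (insert v0 S)ᶜ := by
    ext; simp only [mem_filter, mem_univ, true_and, kanPart_eq_one_iff, mem_compl]
  have h2 : ({v | kanPart v0 S v = 2} : Finset (Fin n)) = S := by
    ext; simp [kanPart_eq_two_iff hv0]
  fin_cases c
  · simp [h0]
  · have : #(insert v0 S) ≤ n := by simpa using card_le_univ (insert v0 S)
    simp only [Fin.mk_one, h1, card_compl, card_insert_of_notMem hv0, Fintype.card_fin,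
      Matrix.cons_val_one, Matrix.cons_val_zero]
    omega
  · simp [h2]

theorem classSizes_kanPart (hv0 : v0 ∉ S) (hSn : #S + 1 ≤ n) :
    classSizes (kanPart v0 S) = ![1, (n : ℝ) - 1 - #S, (#S : ℝ)] := by
  ext c
  rw [classSizes, card_kanPart_fiber hv0]
  fin_cases c <;> simp [Nat.cast_sub (by omega : 1 ≤ n), Nat.cast_sub (by omega : #S ≤ n - 1)]

def kanQuotient (n p : ℝ) : Matrix (Fin 3) (Fin 3) ℝ :=
  !![n - 1 - p, n - 1 - p, 0; 1, 2 * n - 3 - p, p; 0, n - 1 - p, n + p - 3]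

theorem charpoly_qMatrix_kan (hv0 : v0 ∉ S) (hS : 1 ≤ #S) (hSn : #S + 2 ≤ n) :
    (qMatrix (kan v0 S)).charpoly
      = (X - C ((n : ℝ) - 2)) ^ (n - 2 - #S) * (X - C ((n : ℝ) - 3)) ^ (#S - 1) *
          (kanQuotient n #S).charpoly := by
  have hπ : ∀ c, 0 < #{v | kanPart v0 S v = c} := fun c => by
    rw [card_kanPart_fiber hv0]; fin_cases c <;> simp [-card_pos] <;> omega
  rw [charpoly_qMatrix_eq_of_adjMatrix_eq_submatrix _ _ hπ _ (adjMatrix_kan hv0),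
    Fin.prod_univ_three, classSizes_kanPart hv0 (by omega)]
  have hq : quotientQMatrix (kanPart v0 S) kanJoinMatrix = kanQuotient n #S := by
    rw [quotientQMatrix, classSizes_kanPart hv0 (by omega)]
    ext i j
    rw [Matrix.add_apply, mul_diagonal, diagonal_apply]
    fin_cases i <;> fin_cases j <;>
      simp [kanJoinMatrix, kanQuotient, mulVec, dotProduct, Fin.sum_univ_three] <;> ring
  have hrow : kanJoinMatrix *ᵥ ![1, (n : ℝ) - 1 - #S, #S] = ![(n : ℝ) - #S, n, n - 1] := by
    ext c; fin_cases c <;> simp [kanJoinMatrix, mulVec, dotProduct, Fin.sum_univ_three] <;> ring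
  have hexp : n - 1 - #S - 1 = n - 2 - #S := by omega
  simp only [card_kanPart_fiber hv0, hq, hrow, cons_val_zero, cons_val_one, cons_val_two,
    head_cons, tail_cons, Nat.sub_self, pow_zero, one_mul, hexp]
  rw [show (n : ℝ) - 1 - 2 = n - 3 by ring]

end Kan

section KanMinusFour

noncomputable def kanEigMinus (n : ℝ) : ℝ := n - 1 / 2 - √(4 * n * (n - 7) + 73) / 2

noncomputable def kanEigPlus (n : ℝ) : ℝ := n - 1 / 2 + √(4 * n * (n - 7) + 73) / 2

theorem kanQuotient_discr_nonneg (n : ℝ) : 0 ≤ 4 * n * (n - 7) + 73 := by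
  nlinarith [sq_nonneg (2 * n - 7)]

theorem charpoly_kanQuotient_sub_four (n : ℝ) :
    (kanQuotient n (n - 4)).charpoly
      = (X - C (n - 2)) * (X - C (kanEigMinus n)) * (X - C (kanEigPlus n)) := by
  refine Polynomial.funext fun x => ?_
  have hsq := Real.sq_sqrt (kanQuotient_discr_nonneg n)
  rw [eval_charpoly, det_fin_three]
  simp [kanQuotient, kanEigMinus, kanEigPlus]
  linear_combination (x - (n - 2)) / 4 * hsq

theorem two_le_kanEigMinus {n : ℝ} (hn : 6 ≤ n) : 2 ≤ kanEigMinus n := by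
  have : √(4 * n * (n - 7) + 73) ≤ 2 * n - 5 :=
    Real.sqrt_le_iff.2 ⟨by linarith, by nlinarith⟩
  rw [kanEigMinus]; linarith

theorem kanEigMinus_le_sub_three {n : ℝ} (hn : 6 ≤ n) : kanEigMinus n ≤ n - 3 := by
  have : 5 ≤ √(4 * n * (n - 7) + 73) := Real.le_sqrt_of_sq_le (by nlinarith)
  rw [kanEigMinus]; linarith

theorem kanEigMinus_le_kanEigPlus (n : ℝ) : kanEigMinus n ≤ kanEigPlus n := by
  rw [kanEigMinus, kanEigPlus]; linarith [Real.sqrt_nonneg (4 * n * (n - 7) + 73)]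

variable {n : ℕ} {v0 : Fin n} {S : Finset (Fin n)}

theorem mem_roots_charpoly_qMatrix_kan (hn : 6 ≤ n) (hv0 : v0 ∉ S) (hS : #S = n - 4) (q : ℝ) :
    q ∈ (qMatrix (kan v0 S)).charpoly.roots ↔
      q = n - 2 ∨ q = n - 3 ∨ q = kanEigMinus n ∨ q = kanEigPlus n := by
  have hp : (#S : ℝ) = n - 4 := by rw [hS, Nat.cast_sub (by omega)]; norm_num
  rw [mem_roots (charpoly_monic _).ne_zero, IsRoot,
    charpoly_qMatrix_kan hv0 (by omega) (by omega), hp, charpoly_kanQuotient_sub_four]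
  have hS1 : #S - 1 ≠ 0 := by omega
  simp only [eval_mul, eval_pow, eval_sub, eval_X, eval_C, mul_eq_zero, pow_eq_zero_iff',
    sub_eq_zero]
  tauto

end KanMinusFour

theorem kan_signless_laplacian_eigenvalues {n : ℕ} (hn : 6 ≤ n)
    (v0 : Fin n) (S : Finset (Fin n)) (hv0 : v0 ∉ S) (hS : S.card = n - 4) :
    (∀ q ∈ (qMatrix (kan v0 S)).charpoly.roots, (2 : ℝ) ≤ q) ∧
      ((n : ℝ) - 1 / 2 - Real.sqrt (4 * n * ((n : ℝ) - 7) + 73) / 2) ∈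
        (qMatrix (kan v0 S)).charpoly.roots ∧
      (∀ q ∈ (qMatrix (kan v0 S)).charpoly.roots,
        (n : ℝ) - 1 / 2 - Real.sqrt (4 * n * ((n : ℝ) - 7) + 73) / 2 ≤ q) ∧
      2 ≤ (n : ℝ) - 1 / 2 - Real.sqrt (4 * n * ((n : ℝ) - 7) + 73) / 2 := by
  have hn' : (6 : ℝ) ≤ n := by exact_mod_cast hn
  have hroots := mem_roots_charpoly_qMatrix_kan hn hv0 hS
  have hmin : ∀ q ∈ (qMatrix (kan v0 S)).charpoly.roots, kanEigMinus n ≤ q := by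
    intro q hq
    rcases (hroots q).1 hq with rfl | rfl | rfl | rfl
    · linarith [kanEigMinus_le_sub_three hn']
    · exact kanEigMinus_le_sub_three hn'
    · exact le_rfl
    · exact kanEigMinus_le_kanEigPlus n
  exact ⟨fun q hq => (two_le_kanEigMinus hn').trans (hmin q hq),
    (hroots _).2 (Or.inr (Or.inr (Or.inl rfl))), hmin, two_le_kanEigMinus hn'⟩
end
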